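/- Let A be a finite idempotent algebra and B_1,…,B_n two-element subuniverses of A such that for each i there exists a binary term operation f_i of A whose restriction to B_i is a semilattice operation. Then there exists a single binary term operation f of A whose restriction to every B_i, 1 ≤ i ≤ n, is a semilattice operation. -/

import Mathlib

/-! Induction on `n`. If `f` is a semilattice term operation on `B 0, …, B (n-1)` and `g` one on
`B n`, then `(x, y) ↦ f (g x y) (g y x)` works for all of them: on `B n` its two arguments
coincide and `f` is idempotent; on `B j` with `j < n` the pair `(g x y, g y x)` stays in the
subuniverse `B j`, where `f` is commutative, and `g` is idempotent. -/

namespace UA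

/-- Terms over a signature `(ι, ar)` with `n` variables. -/
inductive Term (ι : Type) (ar : ι → ℕ) (n : ℕ) : Type where
  | var : Fin n → Term ι ar n
  | app : (i : ι) → (Fin (ar i) → Term ι ar n) → Term ι ar n

/-- Evaluation of a term in an algebra with operations `ops`. -/
def Term.eval {ι : Type} {ar : ι → ℕ} {A : Type} (ops : ∀ i : ι, (Fin (ar i) → A) → A)
    {n : ℕ} : Term ι ar n → (Fin n → A) → A
  | .var j, x => x j
  | .app i ts, x => ops i fun k => Term.eval ops (ts k) x

variable {ι : Type} {ar : ι → ℕ} {A : Type}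

/-- An algebra is idempotent if every basic operation is. -/
def Idempotent (ops : ∀ i : ι, (Fin (ar i) → A) → A) : Prop :=
  ∀ (i : ι) (x : A), ops i (fun _ => x) = x

/-- A subuniverse: a subset closed under all basic operations. -/
def IsSubuniverse (ops : ∀ i : ι, (Fin (ar i) → A) → A) (S : Set A) : Prop :=
  ∀ (i : ι) (xs : Fin (ar i) → A), (∀ k, xs k ∈ S) → ops i xs ∈ S

/-- The subuniverse generated by `X`. -/
def Sg (ops : ∀ i : ι, (Fin (ar i) → A) → A) (X : Set A) : Set A :=
  ⋂₀ {S | IsSubuniverse ops S ∧ X ⊆ S}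

/-- A tolerance: a reflexive symmetric compatible binary relation. -/
def IsTolerance (ops : ∀ i : ι, (Fin (ar i) → A) → A) (τ : A → A → Prop) : Prop :=
  (∀ x, τ x x) ∧ (∀ x y, τ x y → τ y x) ∧
  ∀ (i : ι) (xs ys : Fin (ar i) → A), (∀ k, τ (xs k) (ys k)) → τ (ops i xs) (ops i ys)

/-- A congruence: a compatible equivalence relation. -/
def IsCongruence (ops : ∀ i : ι, (Fin (ar i) → A) → A) (θ : A → A → Prop) : Prop :=
  Equivalence θ ∧
  ∀ (i : ι) (xs ys : Fin (ar i) → A), (∀ k, θ (xs k) (ys k)) → θ (ops i xs) (ops i ys)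

/-- A congruence of the subalgebra with universe `B`, viewed as a partial
equivalence relation on the big algebra whose domain is exactly `B` and which is
compatible with all operations. -/
def IsCongruenceOn (ops : ∀ i : ι, (Fin (ar i) → A) → A) (B : Set A)
    (θ : A → A → Prop) : Prop :=
  (∀ x y, θ x y → x ∈ B ∧ y ∈ B) ∧
  (∀ x ∈ B, θ x x) ∧
  (∀ x y, θ x y → θ y x) ∧
  (∀ x y z, θ x y → θ y z → θ x z) ∧
  ∀ (i : ι) (xs ys : Fin (ar i) → A), (∀ k, θ (xs k) (ys k)) → θ (ops i xs) (ops i ys)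

/-- `f` is a binary term operation of the algebra. -/
def IsTermOp2 (ops : ∀ i : ι, (Fin (ar i) → A) → A) (f : A → A → A) : Prop :=
  ∃ t : Term ι ar 2, ∀ x y, f x y = t.eval ops ![x, y]

/-- `g` is a ternary term operation of the algebra. -/
def IsTermOp3 (ops : ∀ i : ι, (Fin (ar i) → A) → A) (g : A → A → A → A) : Prop :=
  ∃ t : Term ι ar 3, ∀ x y z, g x y z = t.eval ops ![x, y, z]

/-- Connectivity of `a` and `b` in the hypergraph `H(A)` whose hyperedges are the
nonempty proper subuniverses: a chain of hyperedges with consecutive ones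
intersecting, the first containing `a`, the last containing `b`. -/
def HConnected (ops : ∀ i : ι, (Fin (ar i) → A) → A) (a b : A) : Prop :=
  ∃ L : List (Set A),
    (∀ S ∈ L, IsSubuniverse ops S ∧ S.Nonempty ∧ S ≠ Set.univ) ∧
    L.Chain' (fun S T => (S ∩ T).Nonempty) ∧
    ∃ h : L ≠ [], a ∈ L.head h ∧ b ∈ L.getLast h


/-- `f` restricted to `S` is a semilattice operation. -/
def SemilatticeOn {A : Type} (f : A → A → A) (S : Set A) : Prop :=
  (∀ a ∈ S, f a a = a) ∧ ∀ a ∈ S, ∀ b ∈ S, f a b = f b a ∧ f a b ∈ S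

def Term.subst {m n : ℕ} : Term ι ar m → (Fin m → Term ι ar n) → Term ι ar n
  | .var j, σ => σ j
  | .app i ts, σ => .app i fun k => (ts k).subst σ

section TermOperations

variable {ops : ∀ i : ι, (Fin (ar i) → A) → A}

theorem Term.eval_subst {m n : ℕ} (t : Term ι ar m) (σ : Fin m → Term ι ar n)
    (x : Fin n → A) : (t.subst σ).eval ops x = t.eval ops fun j => (σ j).eval ops x := by
  induction t with
  | var j => rfl
  | app i ts ih => simp only [Term.subst, Term.eval, ih]

theorem Term.eval_mem {S : Set A} (hS : IsSubuniverse ops S) {n : ℕ} (t : Term ι ar n)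
    {x : Fin n → A} (hx : ∀ j, x j ∈ S) : t.eval ops x ∈ S := by
  induction t with
  | var j => exact hx j
  | app i ts ih => exact hS i _ ih

theorem Term.eval_const (hidem : Idempotent ops) {n : ℕ} (t : Term ι ar n) (c : A) :
    t.eval ops (fun _ => c) = c := by
  induction t with
  | var j => rfl
  | app i ts ih => simpa only [Term.eval, ih] using hidem i c

theorem IsTermOp2.apply_self (hidem : Idempotent ops) {f : A → A → A}
    (hf : IsTermOp2 ops f) (c : A) : f c c = c := by
  obtain ⟨t, ht⟩ := hf
  rw [ht, show (![c, c] : Fin 2 → A) = fun _ => c by ext j; fin_cases j <;> rfl]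
  exact t.eval_const hidem c

theorem IsTermOp2.mem {f : A → A → A} (hf : IsTermOp2 ops f) {S : Set A}
    (hS : IsSubuniverse ops S) {x y : A} (hx : x ∈ S) (hy : y ∈ S) : f x y ∈ S := by
  obtain ⟨t, ht⟩ := hf
  rw [ht]
  exact t.eval_mem hS fun j => by fin_cases j <;> assumption

theorem IsTermOp2.comp {f g h : A → A → A} (hf : IsTermOp2 ops f) (hg : IsTermOp2 ops g)
    (hh : IsTermOp2 ops h) : IsTermOp2 ops fun x y => f (g x y) (h x y) := by
  obtain ⟨t, ht⟩ := hf
  obtain ⟨s, hs⟩ := hg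
  obtain ⟨r, hr⟩ := hh
  refine ⟨t.subst ![s, r], fun x y => (ht _ _).trans ?_⟩
  rw [Term.eval_subst]
  congr 1
  ext j
  fin_cases j <;> simp [hs, hr]

theorem IsTermOp2.swap {g : A → A → A} (hg : IsTermOp2 ops g) :
    IsTermOp2 ops fun x y => g y x := by
  obtain ⟨s, hs⟩ := hg
  refine ⟨s.subst ![.var 1, .var 0], fun x y => (hs _ _).trans ?_⟩
  rw [Term.eval_subst]
  congr 1
  ext j
  fin_cases j <;> rfl

end TermOperations

section Symmetrization

variable {f g : A → A → A} {S : Set A}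

theorem SemilatticeOn.comp_outer (hf : SemilatticeOn f S) (hg_idem : ∀ c ∈ S, g c c = c)
    (hgS : ∀ x ∈ S, ∀ y ∈ S, g x y ∈ S) :
    SemilatticeOn (fun x y => f (g x y) (g y x)) S := by
  refine ⟨fun x hx => ?_, fun x hx y hy => hf.2 _ (hgS x hx y hy) _ (hgS y hy x hx)⟩
  simp only [hg_idem x hx]
  exact hf.1 x hx

theorem SemilatticeOn.comp_inner (hg : SemilatticeOn g S) (hf_idem : ∀ c ∈ S, f c c = c) :
    SemilatticeOn (fun x y => f (g x y) (g y x)) S := by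
  refine ⟨fun x hx => ?_, fun x hx y hy => ?_⟩
  · simp only [hg.1 x hx, hf_idem x hx]
  · obtain ⟨hcomm, hmem⟩ := hg.2 x hx y hy
    simp only [← hcomm, hf_idem _ hmem, true_and]
    exact hmem

end Symmetrization

theorem stmt_9_general {ι : Type} {ar : ι → ℕ} {A : Type}
    (ops : ∀ i : ι, (Fin (ar i) → A) → A)
    (hidem : Idempotent ops)
    (n : ℕ) (B : Fin n → Set A)
    (hsub : ∀ i, IsSubuniverse ops (B i))
    (hfi : ∀ i, ∃ fi : A → A → A, IsTermOp2 ops fi ∧ SemilatticeOn fi (B i)) :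
    ∃ f : A → A → A, IsTermOp2 ops f ∧ ∀ i, SemilatticeOn f (B i) := by
  induction n with
  | zero => exact ⟨fun x _ => x, ⟨.var 0, fun _ _ => rfl⟩, fun i => i.elim0⟩
  | succ n ih =>
    obtain ⟨f, hf, hf_sl⟩ := ih (fun j => B j.castSucc) (fun j => hsub _) (fun j => hfi _)
    obtain ⟨g, hg, hg_sl⟩ := hfi (Fin.last n)
    refine ⟨fun x y => f (g x y) (g y x), hf.comp hg hg.swap, Fin.lastCases ?_ fun j => ?_⟩
    · exact hg_sl.comp_inner fun c _ => hf.apply_self hidem c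
    · exact (hf_sl j).comp_outer (fun c _ => hg.apply_self hidem c)
        fun x hx y hy => hg.mem (hsub j.castSucc) hx hy

/-- if each two-element subuniverse `B i` admits some binary term
operation that is semilattice on it, then one binary term operation is
semilattice on all of them simultaneously. -/
theorem stmt_9 {ι : Type} {ar : ι → ℕ} {A : Type} [Fintype A] [Nonempty A]
    (ops : ∀ i : ι, (Fin (ar i) → A) → A)
    (hidem : Idempotent ops)
    (n : ℕ) (B : Fin n → Set A)
    (hsub : ∀ i, IsSubuniverse ops (B i))
    (htwo : ∀ i, ∃ a b : A, a ≠ b ∧ B i = ({a, b} : Set A))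
    (hfi : ∀ i, ∃ fi : A → A → A, IsTermOp2 ops fi ∧ SemilatticeOn fi (B i)) :
    ∃ f : A → A → A, IsTermOp2 ops f ∧ ∀ i, SemilatticeOn f (B i) :=
  stmt_9_general ops hidem n B hsub hfi

end UA
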